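/- arXiv:1612.06278 — 2 statements merged into one kernel-verified Lean document; each statement's English description precedes it below -/
import Mathlib

section
/- Let Γ be an inflationary solution of the Bianchi class B system. Then every α-limit point of Γ lies in K ∪ P_κ ∪ {(0,0,0,0,0)}. If (0,0,0,0,0) is an α-limit point of Γ, then Γ is the constant solution at (0,0,0,0,0). Moreover, Γ cannot have both an α-limit point in K ∖ {Taub 1} and an α-limit point in P_κ. -/
open Real Filter Topology MeasureTheory

noncomputable def NT (κ : ℝ) (Ap Np : ℝ → ℝ) (τ : ℝ) : ℝ :=
  (1/3) * ((Np τ)^2 - κ * Ap τ)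

noncomputable def qF (γ κ : ℝ) (Sp St Ap Np : ℝ → ℝ) (τ : ℝ) : ℝ :=
  (3/2)*(2-γ)*((Sp τ)^2 + St τ) + (1/2)*(3*γ-2)*(1 - Ap τ - NT κ Ap Np τ)

noncomputable def OmF (κ : ℝ) (Sp St Ap Np : ℝ → ℝ) (τ : ℝ) : ℝ :=
  1 - (Sp τ)^2 - St τ - Ap τ - NT κ Ap Np τ

/-- A solution of the Bianchi class B system in expansion-normalised variables. -/
structure BianchiB (γ κ : ℝ) (Sp St Dl Ap Np : ℝ → ℝ) : Prop where
  hγ : γ ∈ Set.Icc (0:ℝ) 2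
  diff_Sp : Differentiable ℝ Sp
  diff_St : Differentiable ℝ St
  diff_Dl : Differentiable ℝ Dl
  diff_Ap : Differentiable ℝ Ap
  diff_Np : Differentiable ℝ Np
  ev_Sp : ∀ τ, deriv Sp τ = (qF γ κ Sp St Ap Np τ - 2) * Sp τ - 2 * NT κ Ap Np τ
  ev_St : ∀ τ, deriv St τ =
    2*(qF γ κ Sp St Ap Np τ - 2) * St τ - 4 * Sp τ * Ap τ - 4 * Dl τ * Np τ
  ev_Dl : ∀ τ, deriv Dl τ =
    2*(qF γ κ Sp St Ap Np τ + Sp τ - 1) * Dl τ + 2*(St τ - NT κ Ap Np τ) * Np τ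
  ev_Ap : ∀ τ, deriv Ap τ = 2*(qF γ κ Sp St Ap Np τ + 2*Sp τ) * Ap τ
  ev_Np : ∀ τ, deriv Np τ = (qF γ κ Sp St Ap Np τ + 2*Sp τ) * Np τ + 6 * Dl τ
  con_main : ∀ τ, St τ * NT κ Ap Np τ - (Dl τ)^2 - (Sp τ)^2 * Ap τ = 0
  con_St : ∀ τ, 0 ≤ St τ
  con_Ap : ∀ τ, 0 ≤ Ap τ
  con_NT : ∀ τ, 0 ≤ NT κ Ap Np τ
  con_sum : ∀ τ, (Sp τ)^2 + St τ + Ap τ + NT κ Ap Np τ ≤ 1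

def Vacuum (κ : ℝ) (Sp St Ap Np : ℝ → ℝ) : Prop :=
  ∀ τ, OmF κ Sp St Ap Np τ = 0

def Inflationary (γ κ : ℝ) (Sp St Ap Np : ℝ → ℝ) : Prop :=
  (∀ τ, 0 < OmF κ Sp St Ap Np τ) ∧ γ ∈ Set.Ico (0:ℝ) (2/3)

def traj (Sp St Dl Ap Np : ℝ → ℝ) (τ : ℝ) : ℝ × ℝ × ℝ × ℝ × ℝ :=
  (Sp τ, St τ, Dl τ, Ap τ, Np τ)

def AlphaLimitPt (Sp St Dl Ap Np : ℝ → ℝ) (p : ℝ × ℝ × ℝ × ℝ × ℝ) : Prop :=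
  ∃ t : ℕ → ℝ, Tendsto t atTop atBot ∧
    Tendsto (fun n => traj Sp St Dl Ap Np (t n)) atTop (𝓝 p)

def Kasner : Set (ℝ × ℝ × ℝ × ℝ × ℝ) :=
  {p | ∃ s, s ∈ Set.Icc (-1:ℝ) 1 ∧ p = (s, 1 - s^2, 0, 0, 0)}

def PlaneWave (κ : ℝ) : Set (ℝ × ℝ × ℝ × ℝ × ℝ) :=
  {p | ∃ s n : ℝ, -1 < s ∧ n^2 = (1+s)*(κ*(1+s) - 3*s) ∧ p = (s, -s*(1+s), 0, (1+s)^2, n)}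

def IsConstSol (Sp St Dl Ap Np : ℝ → ℝ) : Prop :=
  ∀ τ, traj Sp St Dl Ap Np τ = traj Sp St Dl Ap Np 0

/-- `BigO f a` : `f = O(e^{a τ})` as `τ → −∞`. -/
def BigO (f : ℝ → ℝ) (a : ℝ) : Prop :=
  ∃ C > 0, ∃ τ₀ : ℝ, ∀ τ ≤ τ₀, |f τ| ≤ C * Real.exp (a * τ)

open scoped Classical in
noncomputable def PiVal (γ s : ℝ) (vac : Prop) : ℝ :=
  if vac then 4 + 4*s else min (6 - 3*γ) (4 + 4*s)

open scoped Classical in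
noncomputable def PiBarVal (γ s : ℝ) (vac : Prop) : ℝ :=
  if vac then 4 + 4*s - 4*Real.sqrt (3*(1-s^2))
  else min (6 - 3*γ) (4 + 4*s - 4*Real.sqrt (3*(1-s^2)))

/-!
`Ω` is nondecreasing along solutions (for `γ ≤ 2/3`), and into the past of any time where
`Ω < 1` it satisfies `Ω' ≥ c Ω` with `c > 0`; if there is no such time, the solution is the origin.
The orbit lies in a compact state space, so every smooth observable is Lipschitz along it, and a
LaSalle-type argument shows that `Ω` vanishes at every α-limit point.
The function `G = Ã - (1 + Σ₊)²` satisfies `G' = r Ω + 4 E` with `r` bounded and `E ≥ 0` on the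
state space, so `G + (sup |r| / c) Ω` is bounded and nondecreasing before that time; it converges
at `-∞`, and the same argument shows that `E` vanishes at every α-limit point.
On `{Ω = 0, E = 0}` the constraints leave only the Kasner parabola and the plane wave equilibria.
Finally `G` takes the same value at all α-limit points: `-(1 + s)²` at a Kasner point and `0` at a
plane wave, so both can occur together only at Taub 1.
-/

open Set

theorem exists_tendsto_atBot_of_deriv_nonneg {W W' : ℝ → ℝ} {T m : ℝ}
    (hW : ∀ τ, HasDerivAt W (W' τ) τ) (hW' : ∀ τ ≤ T, 0 ≤ W' τ) (hm : ∀ τ, m ≤ W τ) :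
    ∃ w, Tendsto W atBot (𝓝 w) := by
  have hmono : MonotoneOn W (Iic T) :=
    monotoneOn_of_hasDerivWithinAt_nonneg (convex_Iic T)
      (fun τ _ => (hW τ).continuousAt.continuousWithinAt) (fun τ _ => (hW τ).hasDerivWithinAt)
      (fun τ hτ => hW' τ (interior_subset (s := Iic T) hτ))
  have hmono' : Monotone fun τ => W (min τ T) := fun a b hab =>
    hmono (min_le_right a T) (min_le_right b T) (min_le_min_right T hab)
  refine ⟨_, (tendsto_atBot_ciInf hmono' ⟨m, ?_⟩).congr' ?_⟩
  · rintro _ ⟨τ, rfl⟩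
    exact hm _
  · filter_upwards [eventually_le_atBot T] with τ hτ
    rw [min_eq_left hτ]

/-- A LaSalle-type argument: a positive limit value `e` of the Lipschitz function `f` would make
`W` increase by a fixed amount on an interval of fixed length ending at each late `t n`. -/
theorem le_zero_of_tendsto_of_le_deriv {W W' f f' : ℝ → ℝ} {T w B e : ℝ} {t : ℕ → ℝ}
    (hW : ∀ τ, HasDerivAt W (W' τ) τ) (hWlim : Tendsto W atBot (𝓝 w))
    (hf : ∀ τ, HasDerivAt f (f' τ) τ) (hf' : ∀ τ, |f' τ| ≤ B) (hfW : ∀ τ ≤ T, f τ ≤ W' τ)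
    (ht : Tendsto t atTop atBot) (hft : Tendsto (fun n => f (t n)) atTop (𝓝 e)) : e ≤ 0 := by
  by_contra! he
  have hB : 0 ≤ B := (abs_nonneg _).trans (hf' 0)
  set δ := e / (2 * (B + 1))
  have hδ : 0 < δ := by positivity
  have hBδ : B * δ ≤ e / 2 := by
    rw [show e / 2 = (B + 1) * δ by simp only [δ]; field_simp]
    nlinarith
  have hlip : ∀ x y, |f y - f x| ≤ B * |y - x| := fun x y => by
    simpa only [Real.norm_eq_abs] using convex_univ.norm_image_sub_le_of_norm_hasDerivWithin_le
      (fun τ _ => (hf τ).hasDerivWithinAt) (fun τ _ => by simpa using hf' τ) (mem_univ x)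
      (mem_univ y)
  have hstep : ∀ s ≤ T, 3 * e / 4 ≤ f s → e / 4 * δ ≤ W s - W (s - δ) := by
    intro s hs hfs
    have hD : ∀ x ∈ Icc (s - δ) s, e / 4 ≤ W' x := by
      intro x hx
      have h1 := (abs_le.mp (hlip x s)).2
      have h2 : B * |s - x| ≤ B * δ :=
        mul_le_mul_of_nonneg_left (abs_le.mpr ⟨by linarith [hx.2], by linarith [hx.1]⟩) hB
      linarith [hfW x (hx.2.trans hs)]
    have := (convex_Icc (s - δ) s).mul_sub_le_image_sub_of_le_deriv
      (fun τ _ => (hW τ).continuousAt.continuousWithinAt)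
      (fun τ _ => (hW τ).differentiableAt.differentiableWithinAt)
      (fun τ hτ => (hW τ).deriv ▸ hD τ (interior_subset hτ))
      (s - δ) (left_mem_Icc.mpr (by linarith)) s (right_mem_Icc.mpr (by linarith)) (by linarith)
    linarith
  have hincr : ∀ᶠ n in atTop, e / 4 * δ ≤ W (t n) - W (t n - δ) := by
    filter_upwards [ht.eventually (eventually_le_atBot T),
      hft.eventually (eventually_ge_nhds (by linarith : 3 * e / 4 < e))] with n h1 h2
    exact hstep _ h1 h2
  have hlim : Tendsto (fun n => W (t n) - W (t n - δ)) atTop (𝓝 (w - w)) :=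
    (hWlim.comp ht).sub (hWlim.comp (tendsto_atBot_add_const_right _ (-δ) ht))
  have := ge_of_tendsto hlim hincr
  nlinarith

namespace BianchiB

local notation "ℝ⁵" => ℝ × ℝ × ℝ × ℝ × ℝ

noncomputable section StateSpace

variable (γ κ : ℝ)

/- A state `x : ℝ⁵` has coordinates
`(Σ₊, Σ̃, Δ, Ã, N₊) = (x.1, x.2.1, x.2.2.1, x.2.2.2.1, x.2.2.2.2)`. The functions below are
`Ñ`, `q`, `Ω` and the right-hand side of the system as functions of the state, so that e.g.
`NT κ Ap Np τ = nTilde κ (traj Sp St Dl Ap Np τ)` holds by `rfl`. -/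

def nTilde (x : ℝ⁵) : ℝ := (1/3) * (x.2.2.2.2 ^ 2 - κ * x.2.2.2.1)

def decel (x : ℝ⁵) : ℝ :=
  (3/2) * (2 - γ) * (x.1 ^ 2 + x.2.1) + (1/2) * (3 * γ - 2) * (1 - x.2.2.2.1 - nTilde κ x)

def omega (x : ℝ⁵) : ℝ := 1 - x.1 ^ 2 - x.2.1 - x.2.2.2.1 - nTilde κ x

def vectorField (x : ℝ⁵) : ℝ⁵ :=
  ((decel γ κ x - 2) * x.1 - 2 * nTilde κ x,
    2 * (decel γ κ x - 2) * x.2.1 - 4 * x.1 * x.2.2.2.1 - 4 * x.2.2.1 * x.2.2.2.2,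
    2 * (decel γ κ x + x.1 - 1) * x.2.2.1 + 2 * (x.2.1 - nTilde κ x) * x.2.2.2.2,
    2 * (decel γ κ x + 2 * x.1) * x.2.2.2.1,
    (decel γ κ x + 2 * x.1) * x.2.2.2.2 + 6 * x.2.2.1)

def stateSpace : Set ℝ⁵ :=
  {x | 0 ≤ x.2.1 ∧ 0 ≤ x.2.2.2.1 ∧ 0 ≤ nTilde κ x ∧ 0 ≤ omega κ x ∧
    x.2.1 * nTilde κ x - x.2.2.1 ^ 2 - x.1 ^ 2 * x.2.2.2.1 = 0}

def dissipation (x : ℝ⁵) : ℝ :=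
  (1 + x.1) ^ 2 * nTilde κ x + (2 * x.1 * (1 + x.1) + x.2.1) * x.2.2.2.1

def planeWaveGap (x : ℝ⁵) : ℝ := x.2.2.2.1 - (1 + x.1) ^ 2

def omegaRate (x : ℝ⁵) : ℝ := 4 * (x.1 ^ 2 + x.2.1) + (2 - 3 * γ) * (1 - omega κ x)

def gapRate (x : ℝ⁵) : ℝ := (3 * γ - 2) * (x.2.2.2.1 - x.1 - x.1 ^ 2) + 4 * x.1 + 4 * x.1 ^ 2

theorem isCompact_stateSpace : IsCompact (stateSpace κ) := by
  have hclosed : IsClosed (stateSpace κ) := by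
    simp only [stateSpace, omega, nTilde, Set.ofPred_and]
    apply_rules [IsClosed.inter, isClosed_le, isClosed_eq] <;> fun_prop
  set R := 3 + |κ|
  refine (isCompact_Icc (a := (-R, -R, -R, -R, -R)) (b := (R, R, R, R, R))).of_isClosed_subset
    hclosed ?_
  rintro ⟨s, σ, δ, a, n⟩ ⟨hσ, ha, hN, hΩ, hcon⟩
  simp only [omega, nTilde] at hN hΩ hcon
  have hR : 1 ≤ R := by simp only [R]; linarith [abs_nonneg κ]
  have hκa : κ * a ≤ |κ| := by
    nlinarith [neg_abs_le κ, le_abs_self κ, abs_nonneg κ]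
  have bound : ∀ y : ℝ, y ^ 2 ≤ R → -R ≤ y ∧ y ≤ R := fun y hy =>
    abs_le_of_sq_le_sq' (by nlinarith) (by linarith)
  obtain ⟨hs₁, hs₂⟩ := bound s (by nlinarith)
  obtain ⟨hσ₁, hσ₂⟩ := bound σ (by nlinarith)
  obtain ⟨hδ₁, hδ₂⟩ := bound δ (by nlinarith [mul_nonneg (sq_nonneg s) ha])
  obtain ⟨ha₁, ha₂⟩ := bound a (by nlinarith)
  obtain ⟨hn₁, hn₂⟩ := bound n (by nlinarith)
  simp only [mem_Icc, Prod.mk_le_mk]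
  exact ⟨⟨hs₁, hσ₁, hδ₁, ha₁, hn₁⟩, ⟨hs₂, hσ₂, hδ₂, ha₂, hn₂⟩⟩

end StateSpace

section Algebra

variable {κ : ℝ}

theorem nTilde_mul_dissipation {s σ δ a n : ℝ} (hx : (s, σ, δ, a, n) ∈ stateSpace κ) :
    nTilde κ (s, σ, δ, a, n) * dissipation κ (s, σ, δ, a, n)
      = ((1 + s) * nTilde κ (s, σ, δ, a, n) + s * a) ^ 2 + a * δ ^ 2 := by
  simp only [dissipation]
  linear_combination a * hx.2.2.2.2

theorem dissipation_nonneg {x : ℝ⁵} (hx : x ∈ stateSpace κ) : 0 ≤ dissipation κ x := by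
  obtain ⟨s, σ, δ, a, n⟩ := x
  have key := nTilde_mul_dissipation hx
  obtain ⟨hσ, ha, hN, -, -⟩ := hx
  dsimp only at hσ ha
  rcases hN.eq_or_lt with hN0 | hNpos
  · rw [← hN0, zero_mul] at key
    have hsa : s * a = 0 :=
      pow_eq_zero_iff two_ne_zero |>.mp (by nlinarith [mul_nonneg ha (sq_nonneg δ)])
    have hE : dissipation κ (s, σ, δ, a, n) = σ * a := by
      simp only [dissipation, ← hN0]
      linear_combination 2 * (1 + s) * hsa
    exact hE ▸ mul_nonneg hσ ha
  · exact nonneg_of_mul_nonneg_right (key ▸ by positivity) hNpos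

theorem mem_kasner_union_planeWave {x : ℝ⁵} (hx : x ∈ stateSpace κ) (hΩ : omega κ x = 0)
    (hE : dissipation κ x = 0) : x ∈ Kasner ∪ PlaneWave κ := by
  obtain ⟨s, σ, δ, a, n⟩ := x
  have hsq := nTilde_mul_dissipation hx
  rw [hE, mul_zero] at hsq
  obtain ⟨hσ, ha, hN, -, hcon⟩ := hx
  dsimp only at hσ ha hcon
  simp only [omega, dissipation] at hΩ hE
  set N := nTilde κ (s, σ, δ, a, n) with hNdef
  have hn : n ^ 2 = 3 * N + κ * a := by simp only [hNdef, nTilde]; ring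
  have hsum : s ^ 2 + σ + a + N = 1 := by linarith
  have hlin : (1 + s) * N + s * a = 0 :=
    pow_eq_zero_iff two_ne_zero |>.mp (by nlinarith [mul_nonneg ha (sq_nonneg δ)])
  have haδ : a * δ ^ 2 = 0 := by nlinarith [sq_nonneg ((1 + s) * N + s * a)]
  have hs : -1 ≤ s := by nlinarith
  rcases ha.eq_or_lt with rfl | ha
  · have hN0 : N = 0 := by
      rcases mul_eq_zero.mp (by linarith : (1 + s) * N = 0) with h | h
      · nlinarith
      · exact h
    have hδ : δ = 0 := pow_eq_zero_iff two_ne_zero |>.mp (by rw [hN0] at hcon; linarith)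
    have hn0 : n = 0 := pow_eq_zero_iff two_ne_zero |>.mp (by rw [hn, hN0]; ring)
    refine Or.inl ⟨s, ⟨hs, by nlinarith⟩, ?_⟩
    rw [hδ, hn0, show σ = 1 - s ^ 2 by linarith]
  · have hδ : δ = 0 := pow_eq_zero_iff two_ne_zero |>.mp ((mul_eq_zero.mp haδ).resolve_left ha.ne')
    have hσ' : σ = -s * (1 + s) := by
      have : a * (σ + s * (1 + s)) = 0 := by linear_combination hE - (1 + s) * hlin
      linarith [(mul_eq_zero.mp this).resolve_left ha.ne']
    have hs' : -1 < s := hs.lt_of_ne fun h => by subst h; linarith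
    have ha' : a = (1 + s) ^ 2 := by linear_combination (1 + s) * hsum - hlin - (1 + s) * hσ'
    refine Or.inr ⟨s, n, hs', ?_, by rw [hσ', hδ, ha']⟩
    have hN' : N = -s * (1 + s) := by linear_combination hsum - hσ' - ha'
    linear_combination hn + 3 * hN' + κ * ha'

theorem eq_zero_of_one_le_omega {x : ℝ⁵} (hx : x ∈ stateSpace κ) (hΩ : 1 ≤ omega κ x) :
    x = ((0:ℝ), 0, 0, 0, 0) := by
  obtain ⟨s, σ, δ, a, n⟩ := x
  obtain ⟨hσ, ha, hN, -, hcon⟩ := hx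
  dsimp only at hσ ha hcon
  simp only [omega] at hΩ
  set N := nTilde κ (s, σ, δ, a, n) with hNdef
  have hs : s = 0 := pow_eq_zero_iff two_ne_zero |>.mp (by nlinarith)
  have hσ0 : σ = 0 := by nlinarith
  have ha0 : a = 0 := by nlinarith
  have hN0 : N = 0 := by nlinarith
  have hδ : δ = 0 := pow_eq_zero_iff two_ne_zero |>.mp (by rw [hσ0, ha0] at hcon; linarith)
  have hn : n = 0 := pow_eq_zero_iff two_ne_zero |>.mp (by
    simp only [hNdef, nTilde, ha0] at hN0; linarith)
  rw [hs, hσ0, hδ, ha0, hn]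

theorem zero_notMem_kasner_union_planeWave :
    ((0:ℝ), 0, 0, 0, 0) ∉ Kasner ∪ PlaneWave κ := by
  rintro (⟨s, -, h⟩ | ⟨s, n, -, -, h⟩) <;> simp only [Prod.mk.injEq] at h
  · nlinarith [h.1, h.2.1]
  · nlinarith [h.1, h.2.2.2.1]

theorem planeWaveGap_eq_zero {x : ℝ⁵} (hx : x ∈ PlaneWave κ) : planeWaveGap x = 0 := by
  obtain ⟨s, n, -, -, rfl⟩ := hx
  simp [planeWaveGap]

theorem eq_taub_of_planeWaveGap_eq_zero {x : ℝ⁵} (hx : x ∈ Kasner) (h : planeWaveGap x = 0) :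
    x = ((-1:ℝ), 0, 0, 0, 0) := by
  obtain ⟨s, -, rfl⟩ := hx
  simp only [planeWaveGap] at h
  obtain rfl : s = -1 := by nlinarith
  norm_num

end Algebra

variable {γ κ : ℝ} {Sp St Dl Ap Np : ℝ → ℝ}

theorem traj_mem_stateSpace (h : BianchiB γ κ Sp St Dl Ap Np) (τ : ℝ) :
    traj Sp St Dl Ap Np τ ∈ stateSpace κ :=
  ⟨h.con_St τ, h.con_Ap τ, h.con_NT τ,
    show 0 ≤ 1 - Sp τ ^ 2 - St τ - Ap τ - NT κ Ap Np τ by linarith [h.con_sum τ], h.con_main τ⟩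

theorem _root_.AlphaLimitPt.mem_stateSpace (h : BianchiB γ κ Sp St Dl Ap Np) {p : ℝ⁵}
    (hp : AlphaLimitPt Sp St Dl Ap Np p) : p ∈ stateSpace κ :=
  let ⟨_, _, hlim⟩ := hp
  (isCompact_stateSpace κ).isClosed.mem_of_tendsto hlim
    (Eventually.of_forall fun _ => h.traj_mem_stateSpace _)

theorem exists_bound_comp_traj (h : BianchiB γ κ Sp St Dl Ap Np) {F : ℝ⁵ → ℝ}
    (hF : Continuous F) : ∃ B, ∀ τ, |F (traj Sp St Dl Ap Np τ)| ≤ B :=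
  let ⟨B, hB⟩ := (isCompact_stateSpace κ).exists_bound_of_continuousOn hF.continuousOn
  ⟨B, fun τ => hB _ (h.traj_mem_stateSpace τ)⟩

theorem hasDerivAt_traj (h : BianchiB γ κ Sp St Dl Ap Np) (τ : ℝ) :
    HasDerivAt (traj Sp St Dl Ap Np) (vectorField γ κ (traj Sp St Dl Ap Np τ)) τ :=
  ((h.diff_Sp τ).hasDerivAt.congr_deriv (h.ev_Sp τ)).prodMk <|
    ((h.diff_St τ).hasDerivAt.congr_deriv (h.ev_St τ)).prodMk <|
    ((h.diff_Dl τ).hasDerivAt.congr_deriv (h.ev_Dl τ)).prodMk <|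
    ((h.diff_Ap τ).hasDerivAt.congr_deriv (h.ev_Ap τ)).prodMk <|
    (h.diff_Np τ).hasDerivAt.congr_deriv (h.ev_Np τ)

theorem exists_hasDerivAt_comp_traj (h : BianchiB γ κ Sp St Dl Ap Np) {F : ℝ⁵ → ℝ}
    (hF : ContDiff ℝ 1 F) : ∃ F' : ℝ → ℝ, ∃ B, ∀ τ,
      HasDerivAt (fun τ => F (traj Sp St Dl Ap Np τ)) (F' τ) τ ∧ |F' τ| ≤ B := by
  have hV : Continuous (vectorField γ κ) := by unfold vectorField decel nTilde; fun_prop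
  obtain ⟨B, hB⟩ := h.exists_bound_comp_traj
    ((hF.continuous_fderiv one_ne_zero).clm_apply hV)
  exact ⟨_, B, fun τ =>
    ⟨(hF.differentiable one_ne_zero _).hasFDerivAt.comp_hasDerivAt τ (h.hasDerivAt_traj τ),
      hB τ⟩⟩

theorem hasDerivAt_omega (h : BianchiB γ κ Sp St Dl Ap Np) (τ : ℝ) :
    HasDerivAt (fun τ => omega κ (traj Sp St Dl Ap Np τ))
      (omegaRate γ κ (traj Sp St Dl Ap Np τ) * omega κ (traj Sp St Dl Ap Np τ)) τ := by
  have hS := (h.diff_Sp τ).hasDerivAt.congr_deriv (h.ev_Sp τ)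
  have hSt := (h.diff_St τ).hasDerivAt.congr_deriv (h.ev_St τ)
  have hA := (h.diff_Ap τ).hasDerivAt.congr_deriv (h.ev_Ap τ)
  have hN := (h.diff_Np τ).hasDerivAt.congr_deriv (h.ev_Np τ)
  refine (((((hS.fun_pow 2).const_sub 1).fun_sub hSt).fun_sub hA).fun_sub
    (((hN.fun_pow 2).fun_sub (hA.const_mul κ)).const_mul (1/3))).congr_deriv ?_
  simp only [omegaRate, omega, nTilde, traj, qF, NT]
  ring

theorem hasDerivAt_planeWaveGap (h : BianchiB γ κ Sp St Dl Ap Np) (τ : ℝ) :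
    HasDerivAt (fun τ => planeWaveGap (traj Sp St Dl Ap Np τ))
      (gapRate γ (traj Sp St Dl Ap Np τ) * omega κ (traj Sp St Dl Ap Np τ)
        + 4 * dissipation κ (traj Sp St Dl Ap Np τ)) τ := by
  have hS := (h.diff_Sp τ).hasDerivAt.congr_deriv (h.ev_Sp τ)
  have hA := (h.diff_Ap τ).hasDerivAt.congr_deriv (h.ev_Ap τ)
  refine (hA.fun_sub ((hS.const_add 1).fun_pow 2)).congr_deriv ?_
  simp only [gapRate, omega, dissipation, nTilde, traj, qF, NT]
  ring

theorem omega_le_one {x : ℝ⁵} (hx : x ∈ stateSpace κ) : omega κ x ≤ 1 := by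
  obtain ⟨hσ, ha, hN, -, -⟩ := hx
  simp only [omega]
  nlinarith [sq_nonneg x.1]

theorem sub_mul_le_omegaRate {x : ℝ⁵} (hx : x ∈ stateSpace κ) {ω : ℝ}
    (hω : omega κ x ≤ ω) (hγ : γ ≤ 2/3) : (2 - 3 * γ) * (1 - ω) ≤ omegaRate γ κ x := by
  have hσ := hx.1
  simp only [omegaRate]
  nlinarith [sq_nonneg x.1]

theorem omegaRate_mul_omega_nonneg {x : ℝ⁵} (hx : x ∈ stateSpace κ) (hγ : γ ≤ 2/3) :
    0 ≤ omegaRate γ κ x * omega κ x :=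
  mul_nonneg ((mul_nonneg (by linarith) (by linarith [omega_le_one hx])).trans
    (sub_mul_le_omegaRate hx le_rfl hγ)) hx.2.2.2.1

theorem monotone_omega (h : BianchiB γ κ Sp St Dl Ap Np) (hγ : γ ≤ 2/3) :
    Monotone fun τ => omega κ (traj Sp St Dl Ap Np τ) :=
  monotone_of_hasDerivAt_nonneg h.hasDerivAt_omega fun τ =>
    omegaRate_mul_omega_nonneg (h.traj_mem_stateSpace τ) hγ

theorem mul_omega_le_omegaRate_mul_omega (h : BianchiB γ κ Sp St Dl Ap Np) (hγ : γ ≤ 2/3) {T₀ τ : ℝ}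
    (hτ : τ ≤ T₀) :
    (2 - 3 * γ) * (1 - omega κ (traj Sp St Dl Ap Np T₀)) * omega κ (traj Sp St Dl Ap Np τ)
      ≤ omegaRate γ κ (traj Sp St Dl Ap Np τ) * omega κ (traj Sp St Dl Ap Np τ) :=
  have hx := h.traj_mem_stateSpace τ
  mul_le_mul_of_nonneg_right (sub_mul_le_omegaRate hx (h.monotone_omega hγ hτ) hγ) hx.2.2.2.1

theorem _root_.AlphaLimitPt.eq_of_tendsto {F : ℝ⁵ → ℝ} (hF : Continuous F) {w : ℝ}
    (hw : Tendsto (fun τ => F (traj Sp St Dl Ap Np τ)) atBot (𝓝 w)) {p : ℝ⁵}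
    (hp : AlphaLimitPt Sp St Dl Ap Np p) : F p = w :=
  let ⟨_, ht, hlim⟩ := hp
  tendsto_nhds_unique ((hF.tendsto p).comp hlim) (hw.comp ht)

theorem _root_.AlphaLimitPt.le_zero (h : BianchiB γ κ Sp St Dl Ap Np) {F : ℝ⁵ → ℝ}
    (hF : ContDiff ℝ 1 F) {W W' : ℝ → ℝ} {T w : ℝ} (hW : ∀ τ, HasDerivAt W (W' τ) τ)
    (hWlim : Tendsto W atBot (𝓝 w)) (hFW : ∀ τ ≤ T, F (traj Sp St Dl Ap Np τ) ≤ W' τ)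
    {p : ℝ⁵} (hp : AlphaLimitPt Sp St Dl Ap Np p) : F p ≤ 0 := by
  obtain ⟨F', B, hF'⟩ := h.exists_hasDerivAt_comp_traj hF
  obtain ⟨t, ht, hlim⟩ := hp
  exact le_zero_of_tendsto_of_le_deriv hW hWlim (fun τ => (hF' τ).1) (fun τ => (hF' τ).2) hFW ht
    ((hF.continuous.tendsto p).comp hlim)

theorem _root_.AlphaLimitPt.omega_eq_zero (h : BianchiB γ κ Sp St Dl Ap Np) (hγ : γ < 2/3)
    {T₀ : ℝ} (hT₀ : omega κ (traj Sp St Dl Ap Np T₀) < 1) {p : ℝ⁵}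
    (hp : AlphaLimitPt Sp St Dl Ap Np p) : omega κ p = 0 := by
  set c := (2 - 3 * γ) * (1 - omega κ (traj Sp St Dl Ap Np T₀))
  have hc : 0 < c := mul_pos (by linarith) (by linarith)
  obtain ⟨w, hw⟩ := exists_tendsto_atBot_of_deriv_nonneg (T := T₀) h.hasDerivAt_omega
    (fun τ _ => omegaRate_mul_omega_nonneg (h.traj_mem_stateSpace τ) hγ.le)
    (fun τ => (h.traj_mem_stateSpace τ).2.2.2.1)
  have := hp.le_zero h (F := fun x => c * omega κ x) (by unfold omega nTilde; fun_prop)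
    h.hasDerivAt_omega hw (fun τ hτ => h.mul_omega_le_omegaRate_mul_omega hγ.le hτ)
  exact le_antisymm (nonpos_of_mul_nonpos_right this hc) (hp.mem_stateSpace h).2.2.2.1

theorem exists_forall_dissipation_eq_zero_and_planeWaveGap_eq
    (h : BianchiB γ κ Sp St Dl Ap Np) (hγ : γ < 2/3) {T₀ : ℝ}
    (hT₀ : omega κ (traj Sp St Dl Ap Np T₀) < 1) :
    ∃ w, ∀ p, AlphaLimitPt Sp St Dl Ap Np p → dissipation κ p = 0 ∧ planeWaveGap p = w := by
  set c := (2 - 3 * γ) * (1 - omega κ (traj Sp St Dl Ap Np T₀))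
  have hc : 0 < c := mul_pos (by linarith) (by linarith)
  obtain ⟨C, hC⟩ := h.exists_bound_comp_traj (F := gapRate γ) (by unfold gapRate; fun_prop)
  have hC0 : 0 ≤ C := (abs_nonneg _).trans (hC 0)
  -- the `Ω`-term of `G'` is absorbed by `(C / c) Ω'`, which dominates it before `T₀`
  set F : ℝ⁵ → ℝ := fun x => planeWaveGap x + C / c * omega κ x
  have hF : Continuous F := by unfold F planeWaveGap omega nTilde; fun_prop
  have hW := fun τ => (h.hasDerivAt_planeWaveGap τ).add ((h.hasDerivAt_omega τ).const_mul (C / c))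
  have hW' : ∀ τ ≤ T₀, 4 * dissipation κ (traj Sp St Dl Ap Np τ) ≤
      gapRate γ (traj Sp St Dl Ap Np τ) * omega κ (traj Sp St Dl Ap Np τ)
        + 4 * dissipation κ (traj Sp St Dl Ap Np τ)
        + C / c * (omegaRate γ κ (traj Sp St Dl Ap Np τ) * omega κ (traj Sp St Dl Ap Np τ)) := by
    intro τ hτ
    have hΩ := (h.traj_mem_stateSpace τ).2.2.2.1
    have hgap := (abs_le.mp (hC τ)).1
    have hrate := h.mul_omega_le_omegaRate_mul_omega hγ.le hτ
    set x := traj Sp St Dl Ap Np τ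
    have : C * omega κ x ≤ C / c * (omegaRate γ κ x * omega κ x) :=
      calc C * omega κ x = C / c * (c * omega κ x) := by field_simp
        _ ≤ _ := mul_le_mul_of_nonneg_left hrate (div_nonneg hC0 hc.le)
    nlinarith [mul_le_mul_of_nonneg_right hgap hΩ]
  obtain ⟨B, hB⟩ := h.exists_bound_comp_traj hF
  obtain ⟨w, hw⟩ := exists_tendsto_atBot_of_deriv_nonneg hW
    (fun τ hτ => (mul_nonneg zero_le_four
      (dissipation_nonneg (h.traj_mem_stateSpace τ))).trans (hW' τ hτ))
    (fun τ => (abs_le.mp (hB τ)).1)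
  refine ⟨w, fun p hp => ⟨?_, ?_⟩⟩
  · have hE := hp.le_zero h (F := fun x => 4 * dissipation κ x)
      (by unfold dissipation nTilde; fun_prop) hW hw hW'
    exact le_antisymm (by linarith) (dissipation_nonneg (hp.mem_stateSpace h))
  · simpa [F, hp.omega_eq_zero h hγ hT₀] using hp.eq_of_tendsto hF hw

end BianchiB

open BianchiB

theorem stmt1 (γ κ : ℝ) (Sp St Dl Ap Np : ℝ → ℝ)
    (hsol : BianchiB γ κ Sp St Dl Ap Np)
    (hinf : Inflationary γ κ Sp St Ap Np) :
    (∀ p : ℝ × ℝ × ℝ × ℝ × ℝ, AlphaLimitPt Sp St Dl Ap Np p →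
      p ∈ Kasner ∪ PlaneWave κ ∪ {(((0:ℝ), 0, 0, 0, 0) : ℝ × ℝ × ℝ × ℝ × ℝ)}) ∧
    (AlphaLimitPt Sp St Dl Ap Np (((0:ℝ), 0, 0, 0, 0) : ℝ × ℝ × ℝ × ℝ × ℝ) →
      ∀ τ, traj Sp St Dl Ap Np τ = (((0:ℝ), 0, 0, 0, 0) : ℝ × ℝ × ℝ × ℝ × ℝ)) ∧
    ¬ ((∃ p : ℝ × ℝ × ℝ × ℝ × ℝ, p ∈ Kasner ∧
          p ≠ (((-1:ℝ), 0, 0, 0, 0) : ℝ × ℝ × ℝ × ℝ × ℝ) ∧ AlphaLimitPt Sp St Dl Ap Np p) ∧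
       (∃ p ∈ PlaneWave κ, AlphaLimitPt Sp St Dl Ap Np p)) := by
  by_cases hzero : ∀ τ, traj Sp St Dl Ap Np τ = ((0:ℝ), 0, 0, 0, 0)
  · have hα : ∀ p, AlphaLimitPt Sp St Dl Ap Np p → p = ((0:ℝ), 0, 0, 0, 0) :=
      fun p ⟨_, _, hlim⟩ =>
        tendsto_nhds_unique hlim (by simp only [hzero]; exact tendsto_const_nhds)
    refine ⟨fun p hp => Or.inr (hα p hp), fun _ => hzero, ?_⟩
    rintro ⟨⟨p, hpK, -, hp⟩, -⟩
    exact zero_notMem_kasner_union_planeWave (κ := κ) (hα p hp ▸ Or.inl hpK)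
  obtain ⟨T₀, hT₀⟩ := not_forall.mp hzero
  have hΩ : omega κ (traj Sp St Dl Ap Np T₀) < 1 :=
    lt_of_not_ge fun h1 => hT₀ (eq_zero_of_one_le_omega (hsol.traj_mem_stateSpace T₀) h1)
  obtain ⟨w, hw⟩ := hsol.exists_forall_dissipation_eq_zero_and_planeWaveGap_eq hinf.2.2 hΩ
  have hKP : ∀ p, AlphaLimitPt Sp St Dl Ap Np p → p ∈ Kasner ∪ PlaneWave κ := fun p hp =>
    mem_kasner_union_planeWave (hp.mem_stateSpace hsol) (hp.omega_eq_zero hsol hinf.2.2 hΩ)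
      (hw p hp).1
  refine ⟨fun p hp => Or.inl (hKP p hp), fun h0 => absurd (hKP _ h0)
    zero_notMem_kasner_union_planeWave, ?_⟩
  rintro ⟨⟨p, hpK, hpT, hp⟩, ⟨p', hp'P, hp'⟩⟩
  exact hpT <| eq_taub_of_planeWaveGap_eq_zero hpK <|
    (hw p hp).2.trans ((hw p' hp').2.symm.trans (planeWaveGap_eq_zero hp'P))
end

section
/- Assume γ ∈ [0,2) and let Γ be a solution of the Bianchi class B system converging to (s, 1−s², 0, 0, 0) as τ → −∞, where s ∈ (1/2, 1], and suppose Δ(τ)N₊(τ) < 0 for all τ ≤ τ₀. Set Π̄ := min(6−3γ, 4+4s−4√(3(1−s²))) if Ω is not identically 0, and Π̄ := 4+4s−4√(3(1−s²)) if Ω ≡ 0. Then for every ε > 0, as τ → −∞: Σ₊ = s + O(e^{(Π̄−ε)τ}), Σ̃ = 1−s² + O(e^{(Π̄−ε)τ}), Δ = O(e^{(2+2s−2√(3(1−s²))−ε)τ}), N₊ = O(e^{(2+2s−2√(3(1−s²))−ε)τ}), Ñ = O(e^{(4+4s−4√(3(1−s²))−ε)τ}), and q = 2 + O(e^{(Π̄−ε)τ}).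 If moreover s ∈ (1/2, 1), then for every ε > 0 there is τ_ε such that for all τ ≤ τ_ε: e^{(2+2s−2√(3(1−s²))+ε)τ} ≤ |Δ(τ)| and e^{(2+2s−2√(3(1−s²))+ε)τ} ≤ |N₊(τ)|. -/
open Real Filter Topology MeasureTheory

/-!
Near the Kasner point `q ≈ 2`, `Σ₊ ≈ s` and `Σ̃ ≈ 1 - s²`, so `(Δ, N₊)` obeys an almost linear
system with matrix `[[2 + 2s, 2(1 - s²)], [6, 2 + 2s]]`, whose eigenvalues are `2 + 2s ± 2ρ`,
`ρ = √(3(1 - s²))`. A backwards Gronwall estimate for a weighted energy `3Δ² + cN₊²` bounds `Δ` and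
`N₊`; `Ã` and `Ω` satisfy scalar linear equations with rates `4 + 4s` and `6 - 3γ`; `q - 2` is a
combination of `Ω`, `Ã`, `Ñ`; and integrating `Σ₊'`, `Σ̃'` from `-∞` transfers this decay to `Σ₊`
and `Σ̃`. For the lower bounds, `(ΔN₊)' ≥ a ΔN₊` for `a` just above `4 + 4s - 4ρ`, so a negative
`ΔN₊` satisfies `|ΔN₊| ≳ e^{aτ}`; dividing by the upper bound for one factor bounds the other.
-/

namespace BigO

variable {f g : ℝ → ℝ} {a b : ℝ}

theorem mono (h : BigO f a) (hba : b ≤ a) : BigO f b := by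
  obtain ⟨C, hC, T, hT⟩ := h
  refine ⟨C, hC, min T 0, fun τ hτ => (hT τ (hτ.trans (min_le_left _ _))).trans ?_⟩
  have hτ0 : τ ≤ 0 := hτ.trans (min_le_right _ _)
  gcongr C * exp ?_
  nlinarith

theorem add (hf : BigO f a) (hg : BigO g a) : BigO (fun τ => f τ + g τ) a := by
  obtain ⟨C, hC, T, hT⟩ := hf
  obtain ⟨D, hD, S, hS⟩ := hg
  refine ⟨C + D, by positivity, min T S, fun τ hτ => ?_⟩
  calc |f τ + g τ| ≤ |f τ| + |g τ| := abs_add_le _ _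
    _ ≤ C * exp (a * τ) + D * exp (a * τ) :=
      add_le_add (hT τ (hτ.trans (min_le_left _ _))) (hS τ (hτ.trans (min_le_right _ _)))
    _ = (C + D) * exp (a * τ) := by ring

theorem mul (hf : BigO f a) (hg : BigO g b) : BigO (fun τ => f τ * g τ) (a + b) := by
  obtain ⟨C, hC, T, hT⟩ := hf
  obtain ⟨D, hD, S, hS⟩ := hg
  refine ⟨C * D, by positivity, min T S, fun τ hτ => ?_⟩
  calc |f τ * g τ| = |f τ| * |g τ| := abs_mul _ _
    _ ≤ (C * exp (a * τ)) * (D * exp (b * τ)) :=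
      mul_le_mul (hT τ (hτ.trans (min_le_left _ _))) (hS τ (hτ.trans (min_le_right _ _)))
        (abs_nonneg _) (by positivity)
    _ = C * D * exp ((a + b) * τ) := by rw [add_mul, exp_add]; ring

theorem mul_bounded {M : ℝ} (hf : BigO f a) (hg : ∀ τ, |g τ| ≤ M) :
    BigO (fun τ => f τ * g τ) a := by
  obtain ⟨C, hC, T, hT⟩ := hf
  have hM : 0 ≤ M := (abs_nonneg _).trans (hg 0)
  refine ⟨C * (M + 1), by positivity, T, fun τ hτ => ?_⟩
  calc |f τ * g τ| = |f τ| * |g τ| := abs_mul _ _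
    _ ≤ (C * exp (a * τ)) * (M + 1) :=
      mul_le_mul (hT τ hτ) ((hg τ).trans (by linarith)) (abs_nonneg _) (by positivity)
    _ = C * (M + 1) * exp (a * τ) := by ring

theorem const_mul (k : ℝ) (hf : BigO f a) : BigO (fun τ => k * f τ) a := by
  simpa only [mul_comm k] using hf.mul_bounded (g := fun _ => k) (fun _ => le_rfl)

theorem congr (hf : BigO f a) (hfg : ∀ τ, f τ = g τ) : BigO g a := by
  simpa only [funext hfg] using hf

theorem of_abs_le (hg : BigO g a) (hfg : ∀ τ, |f τ| ≤ |g τ|) : BigO f a := by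
  obtain ⟨C, hC, T, hT⟩ := hg
  exact ⟨C, hC, T, fun τ hτ => (hfg τ).trans (hT τ hτ)⟩

theorem of_sq (h : BigO (fun τ => f τ ^ 2) a) : BigO f (a / 2) := by
  obtain ⟨C, hC, T, hT⟩ := h
  refine ⟨max C 1, by positivity, T, fun τ hτ => abs_le_of_sq_le_sq ?_ (by positivity)⟩
  have hC' : C ≤ max C 1 ^ 2 := by nlinarith [le_max_left C 1, le_max_right C 1]
  calc f τ ^ 2 ≤ C * exp (a * τ) := (le_abs_self _).trans (hT τ hτ)
    _ ≤ max C 1 ^ 2 * exp (a * τ) := by gcongr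
    _ = (max C 1 * exp (a / 2 * τ)) ^ 2 := by rw [mul_pow, ← exp_nat_mul]; ring_nf

end BigO

/-- The paper's "`f = O(e^{(r - ε)τ})` for every `ε > 0`". -/
def BigOBelow (f : ℝ → ℝ) (r : ℝ) : Prop :=
  ∀ a < r, BigO f a

namespace BigOBelow

variable {f g : ℝ → ℝ} {r r' : ℝ}

theorem mono (h : BigOBelow f r) (hr : r' ≤ r) : BigOBelow f r' :=
  fun a ha => h a (ha.trans_le hr)

theorem add (hf : BigOBelow f r) (hg : BigOBelow g r) : BigOBelow (fun τ => f τ + g τ) r :=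
  fun a ha => (hf a ha).add (hg a ha)

theorem const_mul (k : ℝ) (hf : BigOBelow f r) : BigOBelow (fun τ => k * f τ) r :=
  fun a ha => (hf a ha).const_mul k

theorem sub (hf : BigOBelow f r) (hg : BigOBelow g r) : BigOBelow (fun τ => f τ - g τ) r :=
  fun a ha => ((hf a ha).add ((hg a ha).const_mul (-1))).congr fun τ => by ring

theorem mul_bounded {M : ℝ} (hf : BigOBelow f r) (hg : ∀ τ, |g τ| ≤ M) :
    BigOBelow (fun τ => f τ * g τ) r :=
  fun a ha => (hf a ha).mul_bounded hg

theorem congr (hf : BigOBelow f r) (hfg : ∀ τ, f τ = g τ) : BigOBelow g r :=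
  fun a ha => (hf a ha).congr hfg

theorem mul (hf : BigOBelow f r) (hg : BigOBelow g r') :
    BigOBelow (fun τ => f τ * g τ) (r + r') := by
  intro a ha
  have h := (hf (r - (r + r' - a) / 2) (by linarith)).mul (hg (r' - (r + r' - a) / 2) (by linarith))
  convert h using 1
  ring

theorem of_sq (h : BigOBelow (fun τ => f τ ^ 2) r) : BigOBelow f (r / 2) := fun a ha => by
  simpa using (h (2 * a) (by linarith)).of_sq

end BigOBelow

section Gronwall

variable {f f' : ℝ → ℝ} {a T : ℝ}

theorem hasDerivAt_exp_mul (a x : ℝ) : HasDerivAt (fun τ => exp (a * τ)) (a * exp (a * x)) x := by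
  simpa [mul_comm] using ((hasDerivAt_id x).const_mul a).exp

theorem monotoneOn_Iic_of_hasDerivAt (hf : ∀ x, HasDerivAt f (f' x) x)
    (hf' : ∀ x ≤ T, 0 ≤ f' x) : MonotoneOn f (Set.Iic T) :=
  monotoneOn_of_hasDerivWithinAt_nonneg (convex_Iic T)
    (fun x _ => (hf x).continuousAt.continuousWithinAt) (fun x _ => (hf x).hasDerivWithinAt)
    (fun x hx => hf' x (interior_subset (s := Set.Iic T) hx))

theorem le_mul_exp_of_mul_le_deriv (hf : ∀ x, HasDerivAt f (f' x) x)
    (h : ∀ τ ≤ T, a * f τ ≤ f' τ) : ∀ τ ≤ T, f τ ≤ f T * exp (a * (τ - T)) := by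
  have hg : ∀ x, HasDerivAt (fun τ => f τ * exp (-a * τ)) ((f' x - a * f x) * exp (-a * x)) x :=
    fun x => ((hf x).mul (hasDerivAt_exp_mul (-a) x)).congr_deriv (by ring)
  have hmono := monotoneOn_Iic_of_hasDerivAt hg fun x hx =>
    mul_nonneg (sub_nonneg.2 (h x hx)) (exp_pos _).le
  intro τ hτ
  have key := mul_le_mul_of_nonneg_right (hmono hτ Set.self_mem_Iic hτ) (exp_pos (a * τ)).le
  calc f τ = f τ * exp (-a * τ) * exp (a * τ) := by rw [mul_assoc, ← exp_add]; simp
    _ ≤ f T * exp (-a * T) * exp (a * τ) := key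
    _ = f T * exp (a * (τ - T)) := by rw [mul_assoc, ← exp_add]; ring_nf

theorem BigO.of_mul_le_deriv (hf : ∀ x, HasDerivAt f (f' x) x) (h0 : ∀ τ, 0 ≤ f τ)
    (h : ∀ᶠ τ in atBot, a * f τ ≤ f' τ) : BigO f a := by
  obtain ⟨T, hT⟩ := h.exists_forall_of_atBot
  refine ⟨f T * exp (-a * T) + 1, by have := h0 T; positivity, T, fun τ hτ => ?_⟩
  calc |f τ| = f τ := abs_of_nonneg (h0 τ)
    _ ≤ f T * exp (a * (τ - T)) := le_mul_exp_of_mul_le_deriv hf hT τ hτ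
    _ = f T * exp (-a * T) * exp (a * τ) := by rw [mul_assoc, ← exp_add]; ring_nf
    _ ≤ (f T * exp (-a * T) + 1) * exp (a * τ) := by gcongr; linarith

theorem exists_mul_exp_le_abs_of_mul_le_deriv (hf : ∀ x, HasDerivAt f (f' x) x)
    (h : ∀ᶠ τ in atBot, a * f τ ≤ f' τ) (hneg : ∃ᶠ τ in atBot, f τ < 0) :
    ∃ c > 0, ∀ᶠ τ in atBot, c * exp (a * τ) ≤ |f τ| := by
  obtain ⟨T₁, hT₁⟩ := h.exists_forall_of_atBot
  obtain ⟨T, hT, hTT₁⟩ := (hneg.and_eventually (eventually_le_atBot T₁)).exists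
  have hT' : ∀ τ ≤ T, a * f τ ≤ f' τ := fun τ hτ => hT₁ τ (hτ.trans hTT₁)
  refine ⟨-f T * exp (-a * T), by have := exp_pos (-a * T); nlinarith, ?_⟩
  filter_upwards [eventually_le_atBot T] with τ hτ
  calc -f T * exp (-a * T) * exp (a * τ) = -(f T * exp (a * (τ - T))) := by
        rw [mul_assoc, ← exp_add]; ring_nf
    _ ≤ -f τ := neg_le_neg (le_mul_exp_of_mul_le_deriv hf hT' τ hτ)
    _ ≤ |f τ| := neg_le_abs _

theorem le_of_tendsto_atBot_of_deriv_nonneg {L : ℝ} (hf : ∀ x, HasDerivAt f (f' x) x)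
    (hf' : ∀ x ≤ T, 0 ≤ f' x) (hL : Tendsto f atBot (𝓝 L)) : ∀ τ ≤ T, L ≤ f τ := fun τ hτ =>
  le_of_tendsto hL <| (eventually_le_atBot τ).mono fun _ hx =>
    monotoneOn_Iic_of_hasDerivAt hf hf' (hx.trans hτ) hτ hx

/-- The comparison function `(C / a) e^{aτ}` has derivative `C e^{aτ}` and vanishes at `-∞`, so
`f ± (C / a) e^{aτ}` is monotone in the right direction. -/
theorem BigO.sub_of_tendsto {L : ℝ} (hf : ∀ x, HasDerivAt f (f' x) x) (ha : 0 < a)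
    (hL : Tendsto f atBot (𝓝 L)) (hf' : BigO f' a) : BigO (fun τ => f τ - L) a := by
  obtain ⟨C, hC, T, hT⟩ := hf'
  set g : ℝ → ℝ := fun τ => C / a * exp (a * τ)
  have hg : ∀ x, HasDerivAt g (C * exp (a * x)) x := fun x =>
    ((hasDerivAt_exp_mul a x).const_mul (C / a)).congr_deriv (by field_simp)
  have hg0 : Tendsto g atBot (𝓝 0) := by
    simpa [g] using ((tendsto_exp_atBot.comp (tendsto_id.const_mul_atBot ha)).const_mul (C / a))
  have lower := le_of_tendsto_atBot_of_deriv_nonneg (fun x => (hf x).fun_add (hg x))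
    (fun x hx => by linarith [neg_abs_le (f' x), hT x hx]) (by simpa using hL.add hg0)
  have upper := le_of_tendsto_atBot_of_deriv_nonneg (fun x => (hg x).fun_sub (hf x))
    (fun x hx => by linarith [le_abs_self (f' x), hT x hx]) (by simpa using hg0.sub hL)
  exact ⟨C / a, by positivity, T, fun τ hτ => abs_sub_le_iff.2
    ⟨by linarith [upper τ hτ], by linarith [lower τ hτ]⟩⟩

theorem BigOBelow.sub_of_tendsto {L r : ℝ} (hf : ∀ x, HasDerivAt f (f' x) x) (hr : 0 < r)
    (hL : Tendsto f atBot (𝓝 L)) (hf' : BigOBelow f' r) : BigOBelow (fun τ => f τ - L) r :=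
  fun _ ha => (BigO.sub_of_tendsto hf (lt_max_of_lt_right (half_pos hr)) hL
    (hf' _ (max_lt ha (half_lt_self hr)))).mono (le_max_left _ _)

end Gronwall

theorem eventually_exp_le_mul_exp {a c d : ℝ} (hc : 0 < c) (had : a < d) :
    ∀ᶠ τ in atBot, exp (d * τ) ≤ c * exp (a * τ) := by
  have h : Tendsto (fun τ => exp ((d - a) * τ)) atBot (𝓝 0) :=
    tendsto_exp_atBot.comp (tendsto_id.const_mul_atBot (sub_pos.2 had))
  filter_upwards [h.eventually_le_const hc] with τ hτ
  calc exp (d * τ) = exp ((d - a) * τ) * exp (a * τ) := by rw [← exp_add]; ring_nf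
    _ ≤ c * exp (a * τ) := by gcongr

theorem eventually_exp_le_abs_of_le_abs_mul {f g : ℝ → ℝ} {a b c d : ℝ} (hc : 0 < c)
    (hfg : ∀ᶠ τ in atBot, c * exp (a * τ) ≤ |f τ * g τ|) (hg : BigO g b) (hd : a - b < d) :
    ∀ᶠ τ in atBot, exp (d * τ) ≤ |f τ| := by
  obtain ⟨C, hC, T, hT⟩ := hg
  filter_upwards [hfg, eventually_le_atBot T, eventually_exp_le_mul_exp (div_pos hc hC) hd]
    with τ hlow hτ hexp
  have hprod : c * exp (a * τ) ≤ |f τ| * (C * exp (b * τ)) :=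
    hlow.trans (by rw [abs_mul]; exact mul_le_mul_of_nonneg_left (hT τ hτ) (abs_nonneg _))
  have hsplit : c * exp (a * τ) = c / C * exp ((a - b) * τ) * (C * exp (b * τ)) := by
    rw [show (a - b) * τ = a * τ - b * τ by ring, exp_sub]; field_simp
  rw [hsplit] at hprod
  exact hexp.trans (le_of_mul_le_mul_right hprod (by positivity))

theorem eventually_forall_quadratic_nonneg {ι : Type*} {l : Filter ι} {A B D : ι → ℝ}
    {A₀ B₀ D₀ : ℝ} (hA : Tendsto A l (𝓝 A₀)) (hB : Tendsto B l (𝓝 B₀)) (hD : Tendsto D l (𝓝 D₀))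
    (hA₀ : 0 < A₀) (hdisc : D₀ ^ 2 < 4 * A₀ * B₀) :
    ∀ᶠ t in l, ∀ x y : ℝ, 0 ≤ A t * x ^ 2 + B t * y ^ 2 + D t * (x * y) := by
  have hdisc' := ((hD.pow 2).sub ((hA.const_mul 4).mul hB)).eventually_lt_const
    (sub_neg.2 (by simpa [mul_assoc] using hdisc))
  filter_upwards [hA.eventually_const_lt hA₀, hdisc'] with t hAt hdt x y
  -- `4 A (A x² + B y² + D x y) = (2 A x + D y)² + (4 A B - D²) y²`
  nlinarith [sq_nonneg (2 * A t * x + D t * y), mul_nonneg (sq_nonneg y) (neg_nonneg.2 hdt.le)]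

theorem tendsto_traj_iff {Sp St Dl Ap Np : ℝ → ℝ} {l : Filter ℝ} {p₁ p₂ p₃ p₄ p₅ : ℝ} :
    Tendsto (traj Sp St Dl Ap Np) l (𝓝 (p₁, p₂, p₃, p₄, p₅)) ↔
      Tendsto Sp l (𝓝 p₁) ∧ Tendsto St l (𝓝 p₂) ∧ Tendsto Dl l (𝓝 p₃) ∧ Tendsto Ap l (𝓝 p₄) ∧
        Tendsto Np l (𝓝 p₅) := by
  simp only [Prod.tendsto_iff]
  rfl

theorem qF_sub_two_eq (γ κ : ℝ) (Sp St Ap Np : ℝ → ℝ) (τ : ℝ) :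
    qF γ κ Sp St Ap Np τ - 2 =
      (3 * γ - 6) / 2 * OmF κ Sp St Ap Np τ - 2 * Ap τ - 2 * NT κ Ap Np τ := by
  simp only [qF, OmF]
  ring

section KasnerLimit

variable {γ κ s : ℝ} {Sp St Dl Ap Np : ℝ → ℝ}

theorem tendsto_NT_zero
    (hconv : Tendsto (traj Sp St Dl Ap Np) atBot (𝓝 (s, 1 - s ^ 2, 0, 0, 0))) :
    Tendsto (NT κ Ap Np) atBot (𝓝 0) := by
  obtain ⟨-, -, -, hAp, hNp⟩ := tendsto_traj_iff.1 hconv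
  have h := ((hNp.pow 2).sub (hAp.const_mul κ)).const_mul (1 / 3)
  rwa [show (1 / 3 : ℝ) * (0 ^ 2 - κ * 0) = 0 by ring] at h

theorem tendsto_qF_two
    (hconv : Tendsto (traj Sp St Dl Ap Np) atBot (𝓝 (s, 1 - s ^ 2, 0, 0, 0))) :
    Tendsto (qF γ κ Sp St Ap Np) atBot (𝓝 2) := by
  obtain ⟨hSp, hSt, -, hAp, -⟩ := tendsto_traj_iff.1 hconv
  have h := (((hSp.pow 2).add hSt).const_mul ((3 / 2) * (2 - γ))).add
    (((tendsto_const_nhds (x := (1 : ℝ))).sub hAp |>.sub (tendsto_NT_zero (κ := κ) hconv)).const_mul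
      ((1 / 2) * (3 * γ - 2)))
  rwa [show (3 / 2) * (2 - γ) * (s ^ 2 + (1 - s ^ 2)) + (1 / 2) * (3 * γ - 2) * (1 - 0 - 0) = 2 by
    ring] at h

end KasnerLimit

namespace BianchiB

variable {γ κ : ℝ} {Sp St Dl Ap Np : ℝ → ℝ}

theorem hasDerivAt_Sp (h : BianchiB γ κ Sp St Dl Ap Np) (x : ℝ) :
    HasDerivAt Sp ((qF γ κ Sp St Ap Np x - 2) * Sp x - 2 * NT κ Ap Np x) x :=
  h.ev_Sp x ▸ (h.diff_Sp x).hasDerivAt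

theorem hasDerivAt_St (h : BianchiB γ κ Sp St Dl Ap Np) (x : ℝ) :
    HasDerivAt St
      (2 * (qF γ κ Sp St Ap Np x - 2) * St x - 4 * Sp x * Ap x - 4 * Dl x * Np x) x :=
  h.ev_St x ▸ (h.diff_St x).hasDerivAt

theorem hasDerivAt_Dl (h : BianchiB γ κ Sp St Dl Ap Np) (x : ℝ) :
    HasDerivAt Dl
      (2 * (qF γ κ Sp St Ap Np x + Sp x - 1) * Dl x + 2 * (St x - NT κ Ap Np x) * Np x) x :=
  h.ev_Dl x ▸ (h.diff_Dl x).hasDerivAt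

theorem hasDerivAt_Ap (h : BianchiB γ κ Sp St Dl Ap Np) (x : ℝ) :
    HasDerivAt Ap (2 * (qF γ κ Sp St Ap Np x + 2 * Sp x) * Ap x) x :=
  h.ev_Ap x ▸ (h.diff_Ap x).hasDerivAt

theorem hasDerivAt_Np (h : BianchiB γ κ Sp St Dl Ap Np) (x : ℝ) :
    HasDerivAt Np ((qF γ κ Sp St Ap Np x + 2 * Sp x) * Np x + 6 * Dl x) x :=
  h.ev_Np x ▸ (h.diff_Np x).hasDerivAt

theorem hasDerivAt_NT (h : BianchiB γ κ Sp St Dl Ap Np) (x : ℝ) :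
    HasDerivAt (NT κ Ap Np)
      (2 * (qF γ κ Sp St Ap Np x + 2 * Sp x) * NT κ Ap Np x + 4 * Dl x * Np x) x :=
  ((((h.hasDerivAt_Np x).pow 2).sub ((h.hasDerivAt_Ap x).const_mul κ)).const_mul
    (1 / 3)).congr_deriv (by simp only [NT]; ring)

theorem hasDerivAt_OmF (h : BianchiB γ κ Sp St Dl Ap Np) (x : ℝ) :
    HasDerivAt (OmF κ Sp St Ap Np)
      ((2 * qF γ κ Sp St Ap Np x - (3 * γ - 2)) * OmF κ Sp St Ap Np x) x :=
  (((((hasDerivAt_const x 1).sub ((h.hasDerivAt_Sp x).pow 2)).sub (h.hasDerivAt_St x)).sub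
    (h.hasDerivAt_Ap x)).sub (h.hasDerivAt_NT x)).congr_deriv (by simp only [qF, OmF, NT]; ring)

theorem hasDerivAt_Dl_mul_Np (h : BianchiB γ κ Sp St Dl Ap Np) (x : ℝ) :
    HasDerivAt (fun τ => Dl τ * Np τ)
      ((3 * qF γ κ Sp St Ap Np x + 4 * Sp x - 2) * (Dl x * Np x) +
        2 * (St x - NT κ Ap Np x) * Np x ^ 2 + 6 * Dl x ^ 2) x :=
  ((h.hasDerivAt_Dl x).fun_mul (h.hasDerivAt_Np x)).congr_deriv (by ring)

theorem abs_Sp_le_one (h : BianchiB γ κ Sp St Dl Ap Np) (τ : ℝ) : |Sp τ| ≤ 1 :=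
  (sq_le_one_iff_abs_le_one _).1 <| by
    linarith [h.con_sum τ, h.con_St τ, h.con_Ap τ, h.con_NT τ]

theorem abs_St_le_one (h : BianchiB γ κ Sp St Dl Ap Np) (τ : ℝ) : |St τ| ≤ 1 :=
  abs_le.2 ⟨by linarith [h.con_St τ],
    by linarith [h.con_sum τ, h.con_Ap τ, h.con_NT τ, sq_nonneg (Sp τ)]⟩

theorem OmF_nonneg (h : BianchiB γ κ Sp St Dl Ap Np) (τ : ℝ) : 0 ≤ OmF κ Sp St Ap Np τ := by
  simp only [OmF]
  linarith [h.con_sum τ]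

end BianchiB

theorem PiBarVal_le (γ s : ℝ) (vac : Prop) :
    PiBarVal γ s vac ≤ 4 + 4 * s - 4 * Real.sqrt (3 * (1 - s ^ 2)) := by
  unfold PiBarVal
  split_ifs
  exacts [le_rfl, min_le_right _ _]

theorem PiBarVal_pos {γ s : ℝ} (hγ : γ < 2) (hs : 1 / 2 < s) (vac : Prop) :
    0 < PiBarVal γ s vac := by
  have hρ : Real.sqrt (3 * (1 - s ^ 2)) < 1 + s :=
    (Real.sqrt_lt' (by linarith)).2 (by nlinarith)
  unfold PiBarVal
  split_ifs
  exacts [by linarith, lt_min (by linarith) (by linarith)]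

namespace BianchiB

variable {γ κ s : ℝ} {Sp St Dl Ap Np : ℝ → ℝ}

local notation "ρ" => Real.sqrt (3 * (1 - s ^ 2))

/-- The energy `3 Δ² + c N₊²` with `c = m² / 48`, `m = 4 + 4s - a`: near the Kasner point
`(F' - a F)` is a quadratic form in `(Δ, N₊)` whose discriminant condition reduces to
`1 - s² < c`, i.e. to `a < 4 + 4s - 4ρ`. -/
theorem bigO_sq_Dl_and_sq_Np (h : BianchiB γ κ Sp St Dl Ap Np)
    (hconv : Tendsto (traj Sp St Dl Ap Np) atBot (𝓝 (s, 1 - s ^ 2, 0, 0, 0)))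
    (hs : s ^ 2 ≤ 1)
    {a : ℝ} (ha : a < 4 + 4 * s - 4 * ρ) :
    BigO (fun τ => Dl τ ^ 2) a ∧ BigO (fun τ => Np τ ^ 2) a := by
  obtain ⟨hSp, hSt, -, -, -⟩ := tendsto_traj_iff.1 hconv
  have hq := tendsto_qF_two (γ := γ) (κ := κ) hconv
  have hNT := tendsto_NT_zero (κ := κ) hconv
  obtain ⟨m, rfl⟩ : ∃ m, a = 4 + 4 * s - m := ⟨4 + 4 * s - a, by ring⟩
  have hρ : ρ ^ 2 = 3 * (1 - s ^ 2) := Real.sq_sqrt (by linarith)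
  have hm : 4 * ρ < m := by linarith
  have hρ0 : 0 ≤ ρ := Real.sqrt_nonneg _
  set c := m ^ 2 / 48 with hc_def
  have hc : 1 - s ^ 2 < c := by rw [hc_def]; nlinarith
  set F : ℝ → ℝ := fun τ => 3 * Dl τ ^ 2 + c * Np τ ^ 2
  have hF : ∀ x, HasDerivAt F (12 * (qF γ κ Sp St Ap Np x + Sp x - 1) * Dl x ^ 2 +
      2 * c * (qF γ κ Sp St Ap Np x + 2 * Sp x) * Np x ^ 2 +
      12 * (St x - NT κ Ap Np x + c) * (Dl x * Np x)) x := fun x =>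
    ((((h.hasDerivAt_Dl x).pow 2).const_mul 3).fun_add
      (((h.hasDerivAt_Np x).pow 2).const_mul c)).congr_deriv (by ring)
  have hquad := eventually_forall_quadratic_nonneg (A₀ := 3 * m) (B₀ := c * m)
    (D₀ := 12 * (1 - s ^ 2 + c))
    (A := fun τ => 12 * (qF γ κ Sp St Ap Np τ + Sp τ - 1) - 3 * (4 + 4 * s - m))
    (B := fun τ => c * (2 * (qF γ κ Sp St Ap Np τ + 2 * Sp τ) - (4 + 4 * s - m)))
    (D := fun τ => 12 * (St τ - NT κ Ap Np τ + c))
    (by convert (((hq.add hSp).sub_const 1).const_mul 12).sub_const (3 * (4 + 4 * s - m))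
          using 2; ring)
    (by convert ((((hq.add (hSp.const_mul 2)).const_mul 2).sub_const (4 + 4 * s - m)).const_mul c)
          using 2; ring)
    (by convert (((hSt.sub hNT).add_const c).const_mul 12) using 2; ring)
    (by linarith) (by nlinarith)
  have hFO : BigO F (4 + 4 * s - m) := BigO.of_mul_le_deriv hF (fun τ => by positivity)
    (hquad.mono fun τ hτ => by linear_combination hτ (Dl τ) (Np τ))
  refine ⟨hFO.of_abs_le fun τ => ?_, (hFO.const_mul c⁻¹).of_abs_le fun τ => ?_⟩
  · rw [abs_of_nonneg (by positivity), abs_of_nonneg (by positivity)]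
    nlinarith [sq_nonneg (Np τ), sq_nonneg (Dl τ)]
  · have hc0 : 0 < c := by nlinarith
    rw [abs_of_nonneg (by positivity), abs_of_nonneg (by positivity)]
    simp only [F]
    field_simp
    nlinarith [sq_nonneg (Np τ), sq_nonneg (Dl τ)]

theorem bigOBelow_Dl (h : BianchiB γ κ Sp St Dl Ap Np)
    (hconv : Tendsto (traj Sp St Dl Ap Np) atBot (𝓝 (s, 1 - s ^ 2, 0, 0, 0)))
    (hs : s ^ 2 ≤ 1) :
    BigOBelow Dl (2 + 2 * s - 2 * ρ) :=
  BigOBelow.of_sq (r := 4 + 4 * s - 4 * ρ) (fun _ ha => (h.bigO_sq_Dl_and_sq_Np hconv hs ha).1)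
    |>.mono (by linarith)

theorem bigOBelow_Np (h : BianchiB γ κ Sp St Dl Ap Np)
    (hconv : Tendsto (traj Sp St Dl Ap Np) atBot (𝓝 (s, 1 - s ^ 2, 0, 0, 0)))
    (hs : s ^ 2 ≤ 1) :
    BigOBelow Np (2 + 2 * s - 2 * ρ) :=
  BigOBelow.of_sq (r := 4 + 4 * s - 4 * ρ) (fun _ ha => (h.bigO_sq_Dl_and_sq_Np hconv hs ha).2)
    |>.mono (by linarith)

theorem bigOBelow_Ap (h : BianchiB γ κ Sp St Dl Ap Np)
    (hconv : Tendsto (traj Sp St Dl Ap Np) atBot (𝓝 (s, 1 - s ^ 2, 0, 0, 0))) :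
    BigOBelow Ap (4 + 4 * s) := by
  obtain ⟨hSp, -, -, -, -⟩ := tendsto_traj_iff.1 hconv
  have hrate : Tendsto (fun τ => 2 * (qF γ κ Sp St Ap Np τ + 2 * Sp τ)) atBot (𝓝 (4 + 4 * s)) := by
    convert ((tendsto_qF_two hconv).add (hSp.const_mul 2)).const_mul 2 using 2
    ring
  exact fun a ha => BigO.of_mul_le_deriv h.hasDerivAt_Ap h.con_Ap <|
    (hrate.eventually_const_lt ha).mono fun τ hτ =>
      mul_le_mul_of_nonneg_right hτ.le (h.con_Ap τ)

theorem bigOBelow_NT (h : BianchiB γ κ Sp St Dl Ap Np)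
    (hconv : Tendsto (traj Sp St Dl Ap Np) atBot (𝓝 (s, 1 - s ^ 2, 0, 0, 0)))
    (hs : s ^ 2 ≤ 1) :
    BigOBelow (NT κ Ap Np) (4 + 4 * s - 4 * ρ) :=
  (((BigOBelow.sub (fun _ ha => (h.bigO_sq_Dl_and_sq_Np hconv hs ha).2)
    (((h.bigOBelow_Ap hconv).mono (sub_le_self _ (by positivity))).const_mul κ))
    ).const_mul (1 / 3)).congr fun τ => by simp only [NT]

theorem bigOBelow_OmF (h : BianchiB γ κ Sp St Dl Ap Np)
    (hconv : Tendsto (traj Sp St Dl Ap Np) atBot (𝓝 (s, 1 - s ^ 2, 0, 0, 0))) :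
    BigOBelow (OmF κ Sp St Ap Np) (6 - 3 * γ) := by
  have hrate : Tendsto (fun τ => 2 * qF γ κ Sp St Ap Np τ - (3 * γ - 2)) atBot (𝓝 (6 - 3 * γ)) := by
    convert ((tendsto_qF_two hconv).const_mul 2).sub_const (3 * γ - 2) using 2
    ring
  exact fun a ha => BigO.of_mul_le_deriv h.hasDerivAt_OmF h.OmF_nonneg <|
    (hrate.eventually_const_lt ha).mono fun τ hτ =>
      mul_le_mul_of_nonneg_right hτ.le (h.OmF_nonneg τ)

theorem bigOBelow_OmF_PiBarVal (h : BianchiB γ κ Sp St Dl Ap Np)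
    (hconv : Tendsto (traj Sp St Dl Ap Np) atBot (𝓝 (s, 1 - s ^ 2, 0, 0, 0))) :
    BigOBelow (OmF κ Sp St Ap Np) (PiBarVal γ s (Vacuum κ Sp St Ap Np)) := by
  unfold PiBarVal
  split_ifs with hvac
  · exact fun _ _ => ⟨1, one_pos, 0, fun τ _ => by rw [hvac τ, abs_zero]; positivity⟩
  · exact (h.bigOBelow_OmF hconv).mono (min_le_left _ _)

theorem bigOBelow_qF_sub_two (h : BianchiB γ κ Sp St Dl Ap Np)
    (hconv : Tendsto (traj Sp St Dl Ap Np) atBot (𝓝 (s, 1 - s ^ 2, 0, 0, 0)))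
    (hs : s ^ 2 ≤ 1) {r : ℝ} (hΩ : BigOBelow (OmF κ Sp St Ap Np) r)
    (hr : r ≤ 4 + 4 * s - 4 * ρ) :
    BigOBelow (fun τ => qF γ κ Sp St Ap Np τ - 2) r :=
  (((hΩ.const_mul ((3 * γ - 6) / 2)).sub
      (((h.bigOBelow_Ap hconv).mono (hr.trans (sub_le_self _ (by positivity)))).const_mul 2)).sub
    (((h.bigOBelow_NT hconv hs).mono hr).const_mul 2)).congr fun τ => (qF_sub_two_eq ..).symm

theorem bigOBelow_Sp_sub (h : BianchiB γ κ Sp St Dl Ap Np)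
    (hconv : Tendsto (traj Sp St Dl Ap Np) atBot (𝓝 (s, 1 - s ^ 2, 0, 0, 0)))
    (hs : s ^ 2 ≤ 1)
    {r : ℝ} (hr0 : 0 < r) (hΩ : BigOBelow (OmF κ Sp St Ap Np) r) (hr : r ≤ 4 + 4 * s - 4 * ρ) :
    BigOBelow (fun τ => Sp τ - s) r :=
  BigOBelow.sub_of_tendsto h.hasDerivAt_Sp hr0 (tendsto_traj_iff.1 hconv).1 <|
    ((h.bigOBelow_qF_sub_two hconv hs hΩ hr).mul_bounded h.abs_Sp_le_one).sub
      (((h.bigOBelow_NT hconv hs).mono hr).const_mul 2)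

theorem bigOBelow_St_sub (h : BianchiB γ κ Sp St Dl Ap Np)
    (hconv : Tendsto (traj Sp St Dl Ap Np) atBot (𝓝 (s, 1 - s ^ 2, 0, 0, 0)))
    (hs : s ^ 2 ≤ 1)
    {r : ℝ} (hr0 : 0 < r) (hΩ : BigOBelow (OmF κ Sp St Ap Np) r) (hr : r ≤ 4 + 4 * s - 4 * ρ) :
    BigOBelow (fun τ => St τ - (1 - s ^ 2)) r := by
  have hAp : BigOBelow Ap r :=
    (h.bigOBelow_Ap hconv).mono (hr.trans (sub_le_self _ (by positivity)))
  have hDlNp : BigOBelow (fun τ => Dl τ * Np τ) r :=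
    ((h.bigOBelow_Dl hconv hs).mul (h.bigOBelow_Np hconv hs)).mono (by linarith)
  refine BigOBelow.sub_of_tendsto h.hasDerivAt_St hr0 (tendsto_traj_iff.1 hconv).2.1 ?_
  refine ((((h.bigOBelow_qF_sub_two hconv hs hΩ hr).mul_bounded h.abs_St_le_one).const_mul 2).sub
    (((hAp.mul_bounded h.abs_Sp_le_one).const_mul 4).add (hDlNp.const_mul 4))).congr fun τ => ?_
  ring

/-- For `a` in the window `|4 + 4s - a| < 4ρ`, `(ΔN₊)' - a ΔN₊` is eventually a nonnegative
quadratic form in `(Δ, N₊)`. -/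
theorem exists_mul_exp_le_abs_Dl_mul_Np (h : BianchiB γ κ Sp St Dl Ap Np)
    (hconv : Tendsto (traj Sp St Dl Ap Np) atBot (𝓝 (s, 1 - s ^ 2, 0, 0, 0)))
    (hs : s ^ 2 < 1)
    (hneg : ∃ᶠ τ in atBot, Dl τ * Np τ < 0) {a : ℝ} (ha : 4 + 4 * s - 4 * ρ < a) :
    ∃ c > 0, ∀ᶠ τ in atBot, c * exp (a * τ) ≤ |Dl τ * Np τ| := by
  obtain ⟨hSp, hSt, -, -, -⟩ := tendsto_traj_iff.1 hconv
  have hq := tendsto_qF_two (γ := γ) (κ := κ) hconv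
  have hNT := tendsto_NT_zero (κ := κ) hconv
  have hρ : ρ ^ 2 = 3 * (1 - s ^ 2) := Real.sq_sqrt (by linarith)
  have hρ0 : 0 < ρ := Real.sqrt_pos.2 (by linarith)
  set b := min a (4 + 4 * s)
  have hb : 4 + 4 * s - 4 * ρ < b := lt_min ha (by linarith)
  have hb' : b ≤ 4 + 4 * s := min_le_right _ _
  have hquad := eventually_forall_quadratic_nonneg (A₀ := 6) (B₀ := 2 * (1 - s ^ 2))
    (D₀ := 4 + 4 * s - b) (A := fun _ => 6) (B := fun τ => 2 * (St τ - NT κ Ap Np τ))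
    (D := fun τ => 3 * qF γ κ Sp St Ap Np τ + 4 * Sp τ - 2 - b) tendsto_const_nhds
    (by simpa using (hSt.sub hNT).const_mul 2)
    (by convert (((hq.const_mul 3).add (hSp.const_mul 4)).sub_const 2).sub_const b using 2; ring)
    (by norm_num) (by nlinarith)
  obtain ⟨c, hc, hlow⟩ := exists_mul_exp_le_abs_of_mul_le_deriv h.hasDerivAt_Dl_mul_Np
    (hquad.mono fun τ hτ => by linear_combination hτ (Dl τ) (Np τ)) hneg
  refine ⟨c, hc, ?_⟩
  filter_upwards [hlow, eventually_le_atBot 0] with τ hτ hτ0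
  calc c * exp (a * τ) ≤ c * exp (b * τ) := by
        gcongr c * exp ?_
        nlinarith [min_le_left a (4 + 4 * s)]
    _ ≤ |Dl τ * Np τ| := hτ

end BianchiB

theorem stmt13 (γ κ s τ₀ : ℝ) (Sp St Dl Ap Np : ℝ → ℝ)
    (hsol : BianchiB γ κ Sp St Dl Ap Np) (hγ2 : γ < 2)
    (hs : s ∈ Set.Ioc (1/2 : ℝ) 1)
    (hconv : Tendsto (traj Sp St Dl Ap Np) atBot
      (𝓝 ((s, 1 - s^2, 0, 0, 0) : ℝ × ℝ × ℝ × ℝ × ℝ)))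
    (hsign : ∀ τ ≤ τ₀, Dl τ * Np τ < 0) :
    (∀ ε > 0,
      BigO (fun τ => Sp τ - s) (PiBarVal γ s (Vacuum κ Sp St Ap Np) - ε) ∧
      BigO (fun τ => St τ - (1 - s^2)) (PiBarVal γ s (Vacuum κ Sp St Ap Np) - ε) ∧
      BigO (fun τ => Dl τ) (2 + 2*s - 2*Real.sqrt (3*(1 - s^2)) - ε) ∧
      BigO (fun τ => Np τ) (2 + 2*s - 2*Real.sqrt (3*(1 - s^2)) - ε) ∧
      BigO (fun τ => NT κ Ap Np τ) (4 + 4*s - 4*Real.sqrt (3*(1 - s^2)) - ε) ∧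
      BigO (fun τ => qF γ κ Sp St Ap Np τ - 2)
        (PiBarVal γ s (Vacuum κ Sp St Ap Np) - ε)) ∧
    (s < 1 → ∀ ε > 0, ∃ τε : ℝ, ∀ τ ≤ τε,
      Real.exp ((2 + 2*s - 2*Real.sqrt (3*(1 - s^2)) + ε)*τ) ≤ |Dl τ| ∧
      Real.exp ((2 + 2*s - 2*Real.sqrt (3*(1 - s^2)) + ε)*τ) ≤ |Np τ|) := by
  obtain ⟨hs₁, hs₂⟩ := hs
  have hs_sq : s ^ 2 ≤ 1 := by nlinarith
  have hPb_pos := PiBarVal_pos hγ2 hs₁ (Vacuum κ Sp St Ap Np)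
  have hPb_le := PiBarVal_le γ s (Vacuum κ Sp St Ap Np)
  have hΩ := hsol.bigOBelow_OmF_PiBarVal hconv
  have hDl := hsol.bigOBelow_Dl hconv hs_sq
  have hNp := hsol.bigOBelow_Np hconv hs_sq
  refine ⟨fun ε hε => ⟨hsol.bigOBelow_Sp_sub hconv hs_sq hPb_pos hΩ hPb_le _ (by linarith),
    hsol.bigOBelow_St_sub hconv hs_sq hPb_pos hΩ hPb_le _ (by linarith),
    hDl _ (by linarith), hNp _ (by linarith), hsol.bigOBelow_NT hconv hs_sq _ (by linarith),
    hsol.bigOBelow_qF_sub_two hconv hs_sq hΩ hPb_le _ (by linarith)⟩, fun hs₃ ε hε => ?_⟩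
  set μ := 2 + 2 * s - 2 * Real.sqrt (3 * (1 - s ^ 2))
  have hneg : ∃ᶠ τ in atBot, Dl τ * Np τ < 0 :=
    ((eventually_le_atBot τ₀).mono hsign).frequently
  obtain ⟨c, hc, hP⟩ := hsol.exists_mul_exp_le_abs_Dl_mul_Np hconv (by nlinarith) hneg
    (a := 2 * μ + ε / 2) (by linarith)
  have hDl_low := eventually_exp_le_abs_of_le_abs_mul hc hP (hNp (μ - ε / 4) (by linarith))
    (d := μ + ε) (by linarith)
  have hNp_low := eventually_exp_le_abs_of_le_abs_mul hc (by simpa only [mul_comm] using hP)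
    (hDl (μ - ε / 4) (by linarith)) (d := μ + ε) (by linarith)
  exact (hDl_low.and hNp_low).exists_forall_of_atBot
end
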